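/- arXiv:1907.05412 — 4 statements merged into one kernel-verified Lean document; each statement's English description precedes it below -/
import Mathlib

section
/- A 1-form α on the tangent bundle TM annihilates every second-order differential equation (i.e. is a contact form) if and only if α is horizontal and the function α̇ := ⟨α, ḋ⟩ vanishes identically, where α̇(v_a) = α_{v_a}(v_a) via the horizontal pairing. -/
/-!
At a point `p`, a second-order equation can take any vertical component `w`, so `α` kills all
of them iff `α_p (p.2, w) = 0` for every `w`. Splitting `(p.2, w) = (p.2, 0) + (0, w)`, this is
`α_p (0, w) = 0` (horizontality) together with `α_p (p.2, 0) = 0` (`α̇ = 0`).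
-/

theorem forall_map_mk_eq_zero_iff {F M N P : Type*} [AddZeroClass M]
    [AddZeroClass N] [AddZeroClass P] [FunLike F (M × N) P] [AddMonoidHomClass F (M × N) P]
    (f : F) (v : M) :
    (∀ w, f (v, w) = 0) ↔ (∀ w, f (0, w) = 0) ∧ f (v, 0) = 0 := by
  have split : ∀ w, f (v, w) = f (v, 0) + f (0, w) := fun w => by
    rw [← map_add, Prod.mk_add_mk, add_zero, zero_add]
  refine ⟨fun h => ⟨fun w => ?_, h 0⟩, fun ⟨hv, h0⟩ w => by rw [split, hv, h0, add_zero]⟩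
  rw [← h w, split, h 0, zero_add]

theorem forall_of_forall_fst_eq_iff {X Y Z : Type*} (g : X → Y) (P : X → Y × Z → Prop) :
    (∀ D : X → Y × Z, (∀ x, (D x).1 = g x) → ∀ x, P x (D x)) ↔ ∀ x z, P x (g x, z) := by
  refine ⟨fun h x z => h (fun x => (g x, z)) (fun _ => rfl) x, fun h D hD x => ?_⟩
  rw [← Prod.mk.eta (p := D x), hD x]
  exact h x _

/-- A 1-form `α` on `TM` annihilates every second-order
differential equation (i.e. is a contact form) iff `α` is horizontal and the
function `α̇` vanishes identically.  In coordinates `TM = ℝⁿ × ℝⁿ`: a 1-form is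
a field of covectors `α p : T_p(TM) →L[ℝ] ℝ`; a second-order differential
equation is a field `D` with `(D p).1 = p.2`; `α` is horizontal when it kills
the vertical vectors `(0, w)`; and `α̇(p) = α_p(p.2, 0)` is the pairing of the
horizontal form `α` with the velocity `p.2`. -/
theorem stmt_2 {n : ℕ}
    (α : (Fin n → ℝ) × (Fin n → ℝ) → (((Fin n → ℝ) × (Fin n → ℝ)) →L[ℝ] ℝ)) :
    (∀ D : (Fin n → ℝ) × (Fin n → ℝ) → (Fin n → ℝ) × (Fin n → ℝ),
        (∀ p, (D p).1 = p.2) → ∀ p, α p (D p) = 0)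
      ↔ ((∀ p w, α p (0, w) = 0) ∧ (∀ p, α p (p.2, 0) = 0)) := by
  rw [forall_of_forall_fst_eq_iff Prod.snd (fun p v => α p v = 0), ← forall_and]
  exact forall_congr' fun p => forall_map_mk_eq_zero_iff (α p) p.2
end

section
/- In local coordinates (x^j, ẋ^j) on TM, the contact system (the Pfaff system of 1-forms annihilating all second-order differential equations) is generated, away from the zero section, by the 1-forms ẋ^j dx^i − ẋ^i dx^j for i, j = 1, …, n, and has rank n − 1 at each point outside the zero section. -/
/-!
A covector on `E × F` vanishing on the vertical factor `0 × F` is the pullback `α ∘ fst` of a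
covector `α` on `E`, and pullback along the surjection `fst` is injective. Hence the contact space
at `(x, v)` is isomorphic to the annihilator of `v` in `E*`, of dimension `n - 1` when `v ≠ 0`.
The generators `ẋ^j dx^i - ẋ^i dx^j` are pullbacks of covectors killing `v`; conversely, if
`α v = 0` and `v k ≠ 0`, then `v k • α = ∑ i, α (e i) • (v k • e^i - v i • e^k)`.
-/

/-- The coordinate covector `dx^i` at a point of `TM = ℝⁿ × ℝⁿ`. -/
noncomputable def coordForm (n : ℕ) (i : Fin n) :
    ((Fin n → ℝ) × (Fin n → ℝ)) →ₗ[ℝ] ℝ :=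
  (LinearMap.proj i).comp (LinearMap.fst ℝ (Fin n → ℝ) (Fin n → ℝ))

open Module Submodule

section HorizontalForms

variable {R E F : Type*} [CommRing R] [AddCommGroup E] [Module R E] [AddCommGroup F] [Module R F]

theorem Submodule.mem_dualAnnihilator_span_singleton {v : E} {φ : Dual R E} :
    φ ∈ (R ∙ v).dualAnnihilator ↔ φ v = 0 := by
  rw [mem_dualAnnihilator]
  refine ⟨fun h ↦ h v (mem_span_singleton_self v), fun h w hw ↦ ?_⟩
  obtain ⟨t, rfl⟩ := mem_span_singleton.mp hw
  rw [map_smul, h, smul_zero]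

theorem LinearMap.dualMap_fst_comp_inl {ξ : Dual R (E × F)} (h : ∀ w, ξ (0, w) = 0) :
    (LinearMap.fst R E F).dualMap (ξ ∘ₗ LinearMap.inl R E F) = ξ :=
  LinearMap.prod_ext rfl (LinearMap.ext fun w ↦ by simp [h w, Prod.mk_zero_zero])

theorem setOf_horizontal_annihilator_eq_map_dualMap_fst (v : E) :
    {ξ : Dual R (E × F) | (∀ w, ξ (0, w) = 0) ∧ ξ (v, 0) = 0}
      = (R ∙ v).dualAnnihilator.map (LinearMap.fst R E F).dualMap := by
  ext ξ
  simp only [Set.mem_ofPred_eq, SetLike.mem_coe, mem_map, mem_dualAnnihilator_span_singleton]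
  constructor
  · rintro ⟨hvert, hv⟩
    exact ⟨ξ ∘ₗ LinearMap.inl R E F, hv, LinearMap.dualMap_fst_comp_inl hvert⟩
  · rintro ⟨α, hα, rfl⟩
    exact ⟨fun w ↦ map_zero α, hα⟩

end HorizontalForms

section SkewForms

variable {R K ι : Type*}

def skewForms [CommRing R] (v : ι → R) : Set (Dual R (ι → R)) :=
  {α | ∃ i j, α = v j • LinearMap.proj i - v i • LinearMap.proj j}

variable [Fintype ι] [DecidableEq ι]

theorem LinearMap.apply_eq_sum_smul_apply_single [CommRing R] {M : Type*} [AddCommGroup M]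
    [Module R M] (f : (ι → R) →ₗ[R] M) (a : ι → R) :
    f a = ∑ i, a i • f (Pi.single i 1) := by
  conv_lhs => rw [← Finset.univ_sum_single a]
  rw [map_sum]
  refine Finset.sum_congr rfl fun i _ ↦ ?_
  rw [← map_smul, ← Pi.single_smul', smul_eq_mul, mul_one]

theorem smul_sub_apply_smul_proj_eq_sum [CommRing R] (v : ι → R) (α : Dual R (ι → R))
    (k : ι) :
    v k • α - α v • LinearMap.proj k
      = ∑ i, α (Pi.single i 1) • (v k • LinearMap.proj i - v i • LinearMap.proj k) := by
  refine LinearMap.ext fun a ↦ ?_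
  simp only [LinearMap.sub_apply, LinearMap.smul_apply, LinearMap.coe_sum, Finset.sum_apply,
    LinearMap.proj_apply, smul_eq_mul]
  rw [α.apply_eq_sum_smul_apply_single a, α.apply_eq_sum_smul_apply_single v, Finset.mul_sum,
    Finset.sum_mul, ← Finset.sum_sub_distrib]
  exact Finset.sum_congr rfl fun i _ ↦ by simp only [smul_eq_mul]; ring

theorem span_skewForms [Field K] {v : ι → K} (hv : v ≠ 0) :
    span K (skewForms v) = (K ∙ v).dualAnnihilator := by
  apply le_antisymm
  · rw [span_le]
    rintro _ ⟨i, j, rfl⟩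
    rw [SetLike.mem_coe, mem_dualAnnihilator_span_singleton]
    simp [mul_comm]
  · intro α hα
    rw [mem_dualAnnihilator_span_singleton] at hα
    obtain ⟨k, hk⟩ : ∃ k, v k ≠ 0 := Function.ne_iff.mp hv
    have hα' : α = (v k)⁻¹ • (v k • α - α v • LinearMap.proj k) := by
      rw [hα, zero_smul, sub_zero, inv_smul_smul₀ hk]
    rw [hα', smul_sub_apply_smul_proj_eq_sum]
    exact smul_mem _ _ (sum_mem fun i _ ↦ smul_mem _ _ (subset_span ⟨i, k, rfl⟩))

end SkewForms

theorem Submodule.finrank_dualAnnihilator_span_singleton {K V : Type*} [Field K] [AddCommGroup V]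
    [Module K V] [FiniteDimensional K V] {v : V} (hv : v ≠ 0) :
    finrank K (K ∙ v).dualAnnihilator = finrank K V - 1 := by
  have h := Subspace.finrank_add_finrank_dualAnnihilator_eq (K ∙ v)
  rw [finrank_span_singleton hv] at h
  omega

theorem Submodule.finrank_map_of_injective {K M N : Type*} [Field K] [AddCommGroup M] [Module K M]
    [AddCommGroup N] [Module K N] {f : M →ₗ[K] N} (hf : Function.Injective f)
    (p : Submodule K M) :
    finrank K (p.map f) = finrank K p :=
  (equivMapOfInjective f hf p).finrank_eq.symm

theorem image_skewForms_dualMap_fst (n : ℕ) (v : Fin n → ℝ) :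
    (LinearMap.fst ℝ (Fin n → ℝ) (Fin n → ℝ)).dualMap '' skewForms v
      = {ξ | ∃ i j, ξ = v j • coordForm n i - v i • coordForm n j} := by
  ext ξ
  simp only [skewForms, Set.mem_image, Set.mem_ofPred_eq]
  constructor
  · rintro ⟨_, ⟨i, j, rfl⟩, rfl⟩
    exact ⟨i, j, by rw [map_sub, map_smul, map_smul]; rfl⟩
  · rintro ⟨i, j, rfl⟩
    exact ⟨_, ⟨i, j, rfl⟩, by rw [map_sub, map_smul, map_smul]; rfl⟩

theorem stmt_3_general {n : ℕ} (v : Fin n → ℝ) (hv : v ≠ 0) :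
    ({ξ : ((Fin n → ℝ) × (Fin n → ℝ)) →ₗ[ℝ] ℝ |
        (∀ w, ξ (0, w) = 0) ∧ ξ (v, 0) = 0}
      = ↑(Submodule.span ℝ
          {ξ : ((Fin n → ℝ) × (Fin n → ℝ)) →ₗ[ℝ] ℝ |
            ∃ i j, ξ = v j • coordForm n i - v i • coordForm n j}))
    ∧ Module.finrank ℝ
        (Submodule.span ℝ
          {ξ : ((Fin n → ℝ) × (Fin n → ℝ)) →ₗ[ℝ] ℝ |
            ∃ i j, ξ = v j • coordForm n i - v i • coordForm n j})
      = n - 1 := by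
  rw [← image_skewForms_dualMap_fst, span_image, span_skewForms hv]
  refine ⟨setOf_horizontal_annihilator_eq_map_dualMap_fst v, ?_⟩
  rw [finrank_map_of_injective (LinearMap.dualMap_injective_of_surjective LinearMap.fst_surjective),
    finrank_dualAnnihilator_span_singleton hv, finrank_fin_fun]

/-- Outside the zero section, the contact system at a point
`(x, v)` of `TM` (the space of covectors annihilating all accelerations, i.e.
horizontal covectors `ξ` with `ξ(v, 0) = 0`) is generated by the 1-forms
`ẋ^j dx^i − ẋ^i dx^j`, and has rank `n − 1`. -/
theorem stmt_3 {n : ℕ} (x v : Fin n → ℝ) (hv : v ≠ 0) :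
    ({ξ : ((Fin n → ℝ) × (Fin n → ℝ)) →ₗ[ℝ] ℝ |
        (∀ w, ξ (0, w) = 0) ∧ ξ (v, 0) = 0}
      = ↑(Submodule.span ℝ
          {ξ : ((Fin n → ℝ) × (Fin n → ℝ)) →ₗ[ℝ] ℝ |
            ∃ i j, ξ = v j • coordForm n i - v i • coordForm n j}))
    ∧ Module.finrank ℝ
        (Submodule.span ℝ
          {ξ : ((Fin n → ℝ) × (Fin n → ℝ)) →ₗ[ℝ] ℝ |
            ∃ i j, ξ = v j • coordForm n i - v i • coordForm n j})
      = n - 1 :=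
  stmt_3_general v hv
end

section
/- Given a mechanical system (M, T₂, α) on a pseudo-Riemannian manifold, the corrected force form α̃ := α − (α̇/θ̇) θ, defined on the open set of TM where θ̇ ≠ 0, satisfies α̃̇ = 0, i.e. α̃ belongs to the contact system; hence the corrected mechanical system (M, T₂, α̃) is relativistic. -/
/-! The correction subtracts from `α` its component along `θ`, normalised so that the result
vanishes on the velocity `v` (where `θ̇ = θ(v) ≠ 0`); both `α` and `θ` are horizontal, hence so
is the corrected form. -/

section HorizontalForm

variable {𝕜 E F : Type*} [Field 𝕜] [TopologicalSpace 𝕜]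
  [AddCommGroup E] [Module 𝕜 E] [TopologicalSpace E]
  [AddCommGroup F] [Module 𝕜 F] [TopologicalSpace F]

/-- `E × F` is a tangent space of `TM`, split into position and velocity directions. -/
def IsHorizontal (α : E × F →L[𝕜] 𝕜) : Prop :=
  ∀ w : F, α (0, w) = 0

theorem isHorizontal_comp_fst (φ : E →L[𝕜] 𝕜) :
    IsHorizontal (φ.comp (ContinuousLinearMap.fst 𝕜 E F)) := fun _ => φ.map_zero

theorem IsHorizontal.sub_smul [IsTopologicalRing 𝕜] {α θ : E × F →L[𝕜] 𝕜} (hα : IsHorizontal α)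
    (hθ : IsHorizontal θ) (c : 𝕜) : IsHorizontal (α - c • θ) := fun w => by
  rw [sub_apply, smul_apply, hα w, hθ w, smul_zero, sub_zero]

end HorizontalForm

theorem ContinuousLinearMap.sub_div_smul_apply_self {𝕜 V : Type*} [Field 𝕜]
    [TopologicalSpace 𝕜] [IsTopologicalRing 𝕜] [AddCommGroup V] [Module 𝕜 V]
    [TopologicalSpace V] (α θ : V →L[𝕜] 𝕜) {v : V} (hv : θ v ≠ 0) :
    (α - (α v / θ v) • θ) v = 0 := by
  rw [sub_apply, smul_apply, smul_eq_mul, div_mul_cancel₀ _ hv, sub_self]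

theorem stmt_10_general {n : ℕ}
    (B : (Fin n → ℝ) → ((Fin n → ℝ) →L[ℝ] (Fin n → ℝ) →L[ℝ] ℝ))
    (α : (Fin n → ℝ) × (Fin n → ℝ) → (((Fin n → ℝ) × (Fin n → ℝ)) →L[ℝ] ℝ))
    (hαhor : ∀ p w, α p (0, w) = 0) :
    ∀ p : (Fin n → ℝ) × (Fin n → ℝ), B p.1 p.2 p.2 ≠ 0 →
      (∀ w : Fin n → ℝ,
          (α p - (α p (p.2, 0) / B p.1 p.2 p.2) •
              ((B p.1 p.2).comp
                (ContinuousLinearMap.fst ℝ (Fin n → ℝ) (Fin n → ℝ))))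
            (0, w) = 0)
      ∧ (α p - (α p (p.2, 0) / B p.1 p.2 p.2) •
              ((B p.1 p.2).comp
                (ContinuousLinearMap.fst ℝ (Fin n → ℝ) (Fin n → ℝ))))
            (p.2, 0) = 0 := by
  intro p hp
  let θ := (B p.1 p.2).comp (ContinuousLinearMap.fst ℝ (Fin n → ℝ) (Fin n → ℝ))
  exact ⟨IsHorizontal.sub_smul (hαhor p) (isHorizontal_comp_fst _) _,
    (α p).sub_div_smul_apply_self θ hp⟩

/-- Relativistic correction.  Given a mechanical system
`(M, T₂, α)`, the corrected force form `α̃ := α − (α̇/θ̇) θ`, defined where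
`θ̇ ≠ 0`, satisfies `α̃̇ = 0`, i.e. it belongs to the contact system; hence
`(M, T₂, α̃)` is relativistic.  Coordinates: `TM = ℝⁿ × ℝⁿ`; the metric is a
field of symmetric bilinear forms `B`; `θ_p(u) = B_{p.1}(p.2, u.1)` with
`θ̇(p) = B_{p.1}(p.2, p.2)`; `α` is a horizontal 1-form with
`α̇(p) = α_p(p.2, 0)`; the corrected form is horizontal and its dot vanishes. -/
theorem stmt_10 {n : ℕ}
    (B : (Fin n → ℝ) → ((Fin n → ℝ) →L[ℝ] (Fin n → ℝ) →L[ℝ] ℝ))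
    (hBsymm : ∀ x u w, B x u w = B x w u)
    (α : (Fin n → ℝ) × (Fin n → ℝ) → (((Fin n → ℝ) × (Fin n → ℝ)) →L[ℝ] ℝ))
    (hαhor : ∀ p w, α p (0, w) = 0) :
    ∀ p : (Fin n → ℝ) × (Fin n → ℝ), B p.1 p.2 p.2 ≠ 0 →
      (∀ w : Fin n → ℝ,
          (α p - (α p (p.2, 0) / B p.1 p.2 p.2) •
              ((B p.1 p.2).comp
                (ContinuousLinearMap.fst ℝ (Fin n → ℝ) (Fin n → ℝ))))
            (0, w) = 0)
      ∧ (α p - (α p (p.2, 0) / B p.1 p.2 p.2) •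
              ((B p.1 p.2).comp
                (ContinuousLinearMap.fst ℝ (Fin n → ℝ) (Fin n → ℝ))))
            (p.2, 0) = 0 :=
  stmt_10_general B α hαhor
end

section
/- Let φ: M → N be a smooth map, τ a 1-form in the class of time on an open set U ⊆ TN, and Γ a curve in TM solution of the contact system of M whose image φ₊(Γ) lies in U and avoids the zero section of TN. Then the pullback (φ₊)*(τ) is in the class of time on φ₊⁻¹(U), and consequently the duration ∫_Γ (φ₊)*τ of Γ equals the duration ∫_{φ₊(Γ)} τ of φ₊(Γ). -/
open intervalIntegral

/-- Let `φ : M → N` be smooth, `τ` a 1-form in the class of time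
on an open set `U ⊆ TN`, and `Γ` a (non-vertical) curve in `TM` solution of
the contact system — i.e. the lift `Γ(t) = (c(t), c'(t))` of a parameterized
curve `c` in `M` — whose image `φ₊(Γ)` lies in `U` and avoids the zero section
of `TN`.  Then the pullback `(φ₊)*τ` is in the class of time on `φ₊⁻¹(U)`, and
the duration `∫_Γ (φ₊)*τ` equals the duration `∫_{φ₊(Γ)} τ`.
Coordinates: `M = ℝᵐ`, `N = ℝᵏ`, `TM = ℝᵐ × ℝᵐ`, `TN = ℝᵏ × ℝᵏ`,
`φ₊(x, v) = (φ x, dφₓ v)`; horizontality means killing vertical vectors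
`(0, w)`; `τ̇(q) = τ_q(q.2, 0)`. -/
theorem stmt_19 {m k : ℕ}
    (φ : (Fin m → ℝ) → (Fin k → ℝ)) (hφ : ContDiff ℝ (⊤ : ℕ∞) φ)
    (U : Set ((Fin k → ℝ) × (Fin k → ℝ))) (hU : IsOpen U)
    (τ : (Fin k → ℝ) × (Fin k → ℝ) → (((Fin k → ℝ) × (Fin k → ℝ)) →L[ℝ] ℝ))
    (hτhor : ∀ q ∈ U, ∀ w, τ q (0, w) = 0)
    (hτtime : ∀ q ∈ U, τ q (q.2, 0) = 1)
    (a b : ℝ) (hab : a ≤ b)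
    (c : ℝ → (Fin m → ℝ)) (hc : ContDiff ℝ (⊤ : ℕ∞) c)
    -- `Γ(t) = (c t, c' t)` is a solution of the contact system (a lift);
    -- its image under `φ₊` lies in `U` and avoids the zero section of `TN`:
    (himg : ∀ t ∈ Set.Icc a b,
      ((φ (c t), fderiv ℝ φ (c t) (deriv c t)) : (Fin k → ℝ) × (Fin k → ℝ)) ∈ U)
    (hnonzero : ∀ t ∈ Set.Icc a b, fderiv ℝ φ (c t) (deriv c t) ≠ 0) :
    -- (1) the pullback `(φ₊)*τ` is in the class of time on `φ₊⁻¹(U)`: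
    (∀ p : (Fin m → ℝ) × (Fin m → ℝ),
        ((φ p.1, fderiv ℝ φ p.1 p.2) : (Fin k → ℝ) × (Fin k → ℝ)) ∈ U →
        (∀ w, ((τ (φ p.1, fderiv ℝ φ p.1 p.2)).comp
            (fderiv ℝ (fun q : (Fin m → ℝ) × (Fin m → ℝ) =>
              ((φ q.1, fderiv ℝ φ q.1 q.2) : (Fin k → ℝ) × (Fin k → ℝ))) p))
            (0, w) = 0)
        ∧ ((τ (φ p.1, fderiv ℝ φ p.1 p.2)).comp
            (fderiv ℝ (fun q : (Fin m → ℝ) × (Fin m → ℝ) =>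
              ((φ q.1, fderiv ℝ φ q.1 q.2) : (Fin k → ℝ) × (Fin k → ℝ))) p))
            (p.2, 0) = 1)
    -- (2) the duration of `Γ` equals the duration of `φ₊(Γ)`:
    ∧ (∫ t in a..b,
          ((τ (φ (c t), fderiv ℝ φ (c t) (deriv c t))).comp
            (fderiv ℝ (fun q : (Fin m → ℝ) × (Fin m → ℝ) =>
              ((φ q.1, fderiv ℝ φ q.1 q.2) : (Fin k → ℝ) × (Fin k → ℝ)))
              (c t, deriv c t)))
          (deriv (fun s => ((c s, deriv c s) : (Fin m → ℝ) × (Fin m → ℝ))) t)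
        = ∫ t in a..b,
            (τ (φ (c t), fderiv ℝ φ (c t) (deriv c t)))
              (deriv (fun s =>
                ((φ (c s), fderiv ℝ φ (c s) (deriv c s))
                  : (Fin k → ℝ) × (Fin k → ℝ))) t)) := by
  classical
  set B := fderiv ℝ φ with hB
  have hφd : Differentiable ℝ φ := hφ.differentiable (by simp)
  have hBsmooth : ContDiff ℝ (⊤ : ℕ∞) B := hφ.fderiv_right (le_of_eq (by exact_mod_cast top_add (1 : ℕ∞)))
  have hBd : Differentiable ℝ B := hBsmooth.differentiable (by simp)
  have hcd : Differentiable ℝ c := hc.differentiable (by simp)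
  have hc1 : ContDiff ℝ ((⊤ : ℕ∞) + 1) c := hc.of_le (le_of_eq (by exact_mod_cast top_add (1 : ℕ∞)))
  have hc' : ContDiff ℝ (⊤ : ℕ∞) (deriv c) := (contDiff_succ_iff_deriv.mp hc1).2.2
  have hc'd : Differentiable ℝ (deriv c) := hc'.differentiable (by simp)
  -- derivative of Φ = φ₊ at any point p
  have key : ∀ p : (Fin m → ℝ) × (Fin m → ℝ),
      HasFDerivAt (fun q : (Fin m → ℝ) × (Fin m → ℝ) =>
        ((φ q.1, B q.1 q.2) : (Fin k → ℝ) × (Fin k → ℝ)))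
        (((B p.1).comp (ContinuousLinearMap.fst ℝ (Fin m → ℝ) (Fin m → ℝ))).prod
          ((B p.1).comp (ContinuousLinearMap.snd ℝ (Fin m → ℝ) (Fin m → ℝ)) +
            ((fderiv ℝ B p.1).comp
              (ContinuousLinearMap.fst ℝ (Fin m → ℝ) (Fin m → ℝ))).flip p.2)) p := by
    intro p
    have h1 : HasFDerivAt (fun q : (Fin m → ℝ) × (Fin m → ℝ) => φ q.1)
        ((B p.1).comp (ContinuousLinearMap.fst ℝ (Fin m → ℝ) (Fin m → ℝ))) p :=
      ((hφd p.1).hasFDerivAt).comp p (hasFDerivAt_fst)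
    have hcmap : HasFDerivAt (fun q : (Fin m → ℝ) × (Fin m → ℝ) => B q.1)
        ((fderiv ℝ B p.1).comp (ContinuousLinearMap.fst ℝ (Fin m → ℝ) (Fin m → ℝ))) p :=
      ((hBd p.1).hasFDerivAt).comp p (hasFDerivAt_fst)
    have hsnd : HasFDerivAt (fun q : (Fin m → ℝ) × (Fin m → ℝ) => q.2)
        (ContinuousLinearMap.snd ℝ (Fin m → ℝ) (Fin m → ℝ)) p := hasFDerivAt_snd
    have h2 := hcmap.clm_apply hsnd
    have h2' : HasFDerivAt (fun q : (Fin m → ℝ) × (Fin m → ℝ) => B q.1 q.2)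
        ((B p.1).comp (ContinuousLinearMap.snd ℝ (Fin m → ℝ) (Fin m → ℝ)) +
          ((fderiv ℝ B p.1).comp (ContinuousLinearMap.fst ℝ (Fin m → ℝ) (Fin m → ℝ))).flip p.2) p := h2
    exact h1.prodMk h2'
  constructor
  · intro p hp
    rw [(key p).fderiv]
    constructor
    · intro w
      have h0 := hτhor _ hp (B p.1 w)
      simpa using h0
    · have htime1 : τ (φ p.1, B p.1 p.2) ((B p.1 p.2 : Fin k → ℝ), 0) = 1 :=
        hτtime _ hp
      have hsplit : ∀ u : Fin k → ℝ,
          τ (φ p.1, B p.1 p.2) ((B p.1 p.2 : Fin k → ℝ), u)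
            = τ (φ p.1, B p.1 p.2) (B p.1 p.2, 0)
              + τ (φ p.1, B p.1 p.2) (0, u) := by
        intro u
        rw [← map_add]
        congr 1
        simp
      simp only [ContinuousLinearMap.comp_apply, ContinuousLinearMap.prod_apply,
        ContinuousLinearMap.add_apply, ContinuousLinearMap.flip_apply,
        ContinuousLinearMap.coe_fst', ContinuousLinearMap.coe_snd', map_zero, zero_add]
      rw [hsplit, htime1, hτhor _ hp]
      ring
  · apply intervalIntegral.integral_congr
    intro t _
    have hΓ : HasDerivAt (fun s => ((c s, deriv c s) : (Fin m → ℝ) × (Fin m → ℝ)))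
        ((deriv c t, deriv (deriv c) t)) t :=
      ((hcd t).hasDerivAt).prodMk ((hc'd t).hasDerivAt)
    have hcomp := (key (c t, deriv c t)).comp_hasDerivAt t hΓ
    have e1 : deriv (fun s => ((c s, deriv c s) : (Fin m → ℝ) × (Fin m → ℝ))) t
        = (deriv c t, deriv (deriv c) t) := hΓ.deriv
    have e2 : deriv (fun s =>
        ((φ (c s), B (c s) (deriv c s)) : (Fin k → ℝ) × (Fin k → ℝ))) t
        = (((B (c t)).comp (ContinuousLinearMap.fst ℝ (Fin m → ℝ) (Fin m → ℝ))).prod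
          ((B (c t)).comp (ContinuousLinearMap.snd ℝ (Fin m → ℝ) (Fin m → ℝ)) +
            ((fderiv ℝ B (c t)).comp
              (ContinuousLinearMap.fst ℝ (Fin m → ℝ) (Fin m → ℝ))).flip (deriv c t)))
          (deriv c t, deriv (deriv c) t) := by
      exact hcomp.deriv
    beta_reduce
    rw [(key (c t, deriv c t)).fderiv, e1, e2]
    rfl
end
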